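/- arXiv:1808.05069 — 2 statements merged into one kernel-verified Lean document; each statement's English description precedes it below -/
import Mathlib

section
/- Let p ≥ 2 be an integer, λ ∈ (0,1], and η = ((1−λ)/λ)². Then for every u > 0, α ≥ 0, and w, γ ∈ (−1,1), the following symmetry identity holds: (1−γ²)^((p−3)/2) · exp(−(√u·w − (1−λ)·√α·γ)²/(2λ²)) · f(u(1−w²)/λ²; p−1, ηα(1−γ²)) = (1−w²)^((p−3)/2) · exp(−(√u·γ − (1−λ)·√α·w)²/(2λ²)) · f(u(1−γ²)/λ²; p−1, ηα(1−w²)). -/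
open MeasureTheory Real Set

/-- Pochhammer symbol `(b)_n = b (b+1) ⋯ (b+n-1)`. -/
noncomputable def poch (b : ℝ) (n : ℕ) : ℝ := ∏ i ∈ Finset.range n, (b + (i : ℝ))

/-- Noncentral chi-square density with `p` degrees of freedom and noncentrality `ν`. -/
noncomputable def ncchisq (x p ν : ℝ) : ℝ :=
  Real.exp (-(x + ν) / 2) * x ^ (p / 2 - 1) / ((2 : ℝ) ^ (p / 2) * Real.Gamma (p / 2)) *
    ∑' n : ℕ, (ν * x / 4) ^ n / (poch (p / 2) n * (n.factorial : ℝ))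

/-- symmetry identity exchanging the roles of the angles `w` and `γ`. -/
theorem mewma_kernel_symmetry
    (p : ℕ) (hp : 2 ≤ p) (lam : ℝ) (hlam : lam ∈ Set.Ioc (0 : ℝ) 1) :
    ∀ u : ℝ, 0 < u → ∀ α : ℝ, 0 ≤ α →
    ∀ w ∈ Set.Ioo (-1 : ℝ) 1, ∀ γ ∈ Set.Ioo (-1 : ℝ) 1,
      (1 - γ ^ 2) ^ (((p : ℝ) - 3) / 2) *
          Real.exp (-(Real.sqrt u * w - (1 - lam) * Real.sqrt α * γ) ^ 2 / (2 * lam ^ 2)) *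
          ncchisq (u * (1 - w ^ 2) / lam ^ 2) ((p : ℝ) - 1)
            (((1 - lam) / lam) ^ 2 * α * (1 - γ ^ 2))
        = (1 - w ^ 2) ^ (((p : ℝ) - 3) / 2) *
            Real.exp (-(Real.sqrt u * γ - (1 - lam) * Real.sqrt α * w) ^ 2 / (2 * lam ^ 2)) *
            ncchisq (u * (1 - γ ^ 2) / lam ^ 2) ((p : ℝ) - 1)
              (((1 - lam) / lam) ^ 2 * α * (1 - w ^ 2)) := by
  obtain ⟨hl0, hl1⟩ := hlam
  intro u hu α hα w hw γ hγ
  obtain ⟨hw1, hw2⟩ := hw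
  obtain ⟨hg1, hg2⟩ := hγ
  have hw' : (0:ℝ) < 1 - w ^ 2 := by nlinarith
  have hg' : (0:ℝ) < 1 - γ ^ 2 := by nlinarith
  have hl2 : (0:ℝ) < lam ^ 2 := by positivity
  have hlne : lam ≠ 0 := hl0.ne'
  obtain ⟨s, hs0, rfl⟩ : ∃ s, 0 ≤ s ∧ u = s ^ 2 :=
    ⟨Real.sqrt u, Real.sqrt_nonneg u, (Real.sq_sqrt hu.le).symm⟩
  obtain ⟨a, ha0, rfl⟩ : ∃ a, 0 ≤ a ∧ α = a ^ 2 :=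
    ⟨Real.sqrt α, Real.sqrt_nonneg α, (Real.sq_sqrt hα).symm⟩
  rw [Real.sqrt_sq hs0, Real.sqrt_sq ha0]
  unfold ncchisq
  have he : ((p : ℝ) - 1) / 2 - 1 = ((p : ℝ) - 3) / 2 := by ring
  rw [he]
  -- the tsum arguments agree
  have hser : (((1 - lam) / lam) ^ 2 * a ^ 2 * (1 - γ ^ 2)) * (s ^ 2 * (1 - w ^ 2) / lam ^ 2)
      = (((1 - lam) / lam) ^ 2 * a ^ 2 * (1 - w ^ 2)) * (s ^ 2 * (1 - γ ^ 2) / lam ^ 2) := by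
    field_simp
  rw [hser]
  -- split the rpow factors
  have hx1 : (s ^ 2 * (1 - w ^ 2) / lam ^ 2) ^ (((p : ℝ) - 3) / 2)
      = (s ^ 2 / lam ^ 2) ^ (((p : ℝ) - 3) / 2) * (1 - w ^ 2) ^ (((p : ℝ) - 3) / 2) := by
    rw [← Real.mul_rpow (by positivity) hw'.le]; ring_nf
  have hx2 : (s ^ 2 * (1 - γ ^ 2) / lam ^ 2) ^ (((p : ℝ) - 3) / 2)
      = (s ^ 2 / lam ^ 2) ^ (((p : ℝ) - 3) / 2) * (1 - γ ^ 2) ^ (((p : ℝ) - 3) / 2) := by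
    rw [← Real.mul_rpow (by positivity) hg'.le]; ring_nf
  rw [hx1, hx2]
  -- exponentials combine symmetrically
  have hexp : Real.exp (-(s * w - (1 - lam) * a * γ) ^ 2 / (2 * lam ^ 2)) *
      Real.exp (-(s ^ 2 * (1 - w ^ 2) / lam ^ 2 + ((1 - lam) / lam) ^ 2 * a ^ 2 * (1 - γ ^ 2)) / 2)
      = Real.exp (-(s * γ - (1 - lam) * a * w) ^ 2 / (2 * lam ^ 2)) *
      Real.exp (-(s ^ 2 * (1 - γ ^ 2) / lam ^ 2 + ((1 - lam) / lam) ^ 2 * a ^ 2 * (1 - w ^ 2)) / 2) := by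
    rw [← Real.exp_add, ← Real.exp_add]
    congr 1
    field_simp
    ring
  set S := ∑' n : ℕ, ((((1 - lam) / lam) ^ 2 * a ^ 2 * (1 - w ^ 2)) * (s ^ 2 * (1 - γ ^ 2) / lam ^ 2) / 4) ^ n
      / (poch (((p : ℝ) - 1) / 2) n * (n.factorial : ℝ)) with hS
  set D := (2 : ℝ) ^ (((p : ℝ) - 1) / 2) * Real.Gamma (((p : ℝ) - 1) / 2) with hD
  set E := (s ^ 2 / lam ^ 2) ^ (((p : ℝ) - 3) / 2) with hE
  linear_combination (E * (1 - w ^ 2) ^ (((p : ℝ) - 3) / 2) * (1 - γ ^ 2) ^ (((p : ℝ) - 3) / 2) / D * S) * hexp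
end

section
/- Let p ≥ 2 be an integer and λ ∈ (0,1]. Then for every u > 0 and w ∈ (−1,1), (√u/√(2πλ²)) · exp(−u·w²/(2λ²)) · (1/λ²) · f(u(1−w²)/λ²; p−1, 0) = [Γ(p/2)/(Γ((p−1)/2)·√π)] · (1−w²)^((p−3)/2) · (1/λ²) · f(u/λ²; p, 0). In words: the in-control MEWMA transition kernel evaluated at the origin factorizes into the angle density d(w) times the central chi-square density with p degrees of freedom scaled by λ². -/
open MeasureTheory Real Set

lemma ncchisq_central (x p : ℝ) :
    ncchisq x p 0 = Real.exp (-x / 2) * x ^ (p / 2 - 1) / ((2 : ℝ) ^ (p / 2) * Real.Gamma (p / 2)) := by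
  unfold ncchisq
  have : (∑' n : ℕ, ((0:ℝ) * x / 4) ^ n / (poch (p / 2) n * (n.factorial : ℝ))) = 1 := by
    rw [tsum_eq_single 0]
    · simp [poch]
    · intro n hn
      simp [zero_pow hn]
  rw [this, mul_one, add_zero]

/-- at the origin the in-control MEWMA kernel factorizes into the angle density
times the (scaled) central chi-square density with `p` degrees of freedom. -/
theorem mewma_kernel_at_origin_factorizes
    (p : ℕ) (hp : 2 ≤ p) (lam : ℝ) (hlam : lam ∈ Set.Ioc (0 : ℝ) 1) :
    ∀ u : ℝ, 0 < u → ∀ w ∈ Set.Ioo (-1 : ℝ) 1,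
      Real.sqrt u / Real.sqrt (2 * Real.pi * lam ^ 2) *
          Real.exp (-(u * w ^ 2) / (2 * lam ^ 2)) * (1 / lam ^ 2) *
          ncchisq (u * (1 - w ^ 2) / lam ^ 2) ((p : ℝ) - 1) 0
        = Real.Gamma ((p : ℝ) / 2) / (Real.Gamma (((p : ℝ) - 1) / 2) * Real.sqrt Real.pi) *
            (1 - w ^ 2) ^ (((p : ℝ) - 3) / 2) * (1 / lam ^ 2) *
            ncchisq (u / lam ^ 2) (p : ℝ) 0 := by
  intro u hu w hw
  obtain ⟨hw1, hw2⟩ := hw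
  have hl : 0 < lam := hlam.1
  have hl2 : (0:ℝ) < lam ^ 2 := by positivity
  have hww : (0:ℝ) < 1 - w ^ 2 := by nlinarith
  have hp1 : (0:ℝ) < (p:ℝ) - 1 := by
    have : (2:ℝ) ≤ (p:ℝ) := by exact_mod_cast hp
    linarith
  have hpp : (0:ℝ) < (p:ℝ) := by linarith
  have hG1 : 0 < Real.Gamma (((p:ℝ) - 1) / 2) := Real.Gamma_pos_of_pos (by linarith)
  have hG2 : 0 < Real.Gamma ((p:ℝ) / 2) := Real.Gamma_pos_of_pos (by linarith)
  rw [ncchisq_central, ncchisq_central]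
  have hx1 : (0:ℝ) < u * (1 - w ^ 2) / lam ^ 2 := by positivity
  have hx2 : (0:ℝ) < u / lam ^ 2 := by positivity
  have hL : 0 < Real.sqrt u / Real.sqrt (2 * Real.pi * lam ^ 2) *
          Real.exp (-(u * w ^ 2) / (2 * lam ^ 2)) * (1 / lam ^ 2) *
          (Real.exp (-(u * (1 - w ^ 2) / lam ^ 2) / 2) *
            (u * (1 - w ^ 2) / lam ^ 2) ^ (((p:ℝ) - 1) / 2 - 1) /
            ((2 : ℝ) ^ (((p:ℝ) - 1) / 2) * Real.Gamma (((p:ℝ) - 1) / 2))) := by positivity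
  have hR : 0 < Real.Gamma ((p : ℝ) / 2) / (Real.Gamma (((p : ℝ) - 1) / 2) * Real.sqrt Real.pi) *
            (1 - w ^ 2) ^ (((p : ℝ) - 3) / 2) * (1 / lam ^ 2) *
            (Real.exp (-(u / lam ^ 2) / 2) * (u / lam ^ 2) ^ ((p:ℝ) / 2 - 1) /
            ((2 : ℝ) ^ ((p:ℝ) / 2) * Real.Gamma ((p:ℝ) / 2))) := by positivity
  rw [← Real.exp_log hL, ← Real.exp_log hR]
  congr 1
  rw [Real.log_mul (by positivity) (by positivity), Real.log_mul (by positivity) (by positivity),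
      Real.log_mul (by positivity) (by positivity), Real.log_mul (by positivity) (by positivity),
      Real.log_mul (by positivity) (by positivity), Real.log_mul (by positivity) (by positivity),
      Real.log_div (by positivity) (by positivity), Real.log_div (by positivity) (by positivity),
      Real.log_div (by positivity) (by positivity), Real.log_div (by positivity) (by positivity)]
  rw [Real.log_div (by positivity) (by positivity),
      Real.log_mul (Real.exp_ne_zero _) (by positivity),
      Real.log_mul (by positivity) (by positivity)]
  simp only [Real.log_exp, Real.log_one]
  rw [Real.log_mul (Real.exp_ne_zero _) (ne_of_gt (Real.rpow_pos_of_pos hx2 _)),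
      Real.log_mul (ne_of_gt (Real.rpow_pos_of_pos two_pos _)) hG2.ne',
      Real.log_mul hG1.ne' (ne_of_gt (Real.sqrt_pos.mpr Real.pi_pos))]
  simp only [Real.log_exp]
  rw [Real.log_rpow hx2, Real.log_rpow hww, Real.log_rpow two_pos, Real.log_rpow two_pos,
      Real.log_sqrt hu.le, Real.log_sqrt (by positivity), Real.log_sqrt Real.pi_pos.le]
  rw [Real.log_mul (by positivity) hl2.ne', Real.log_mul two_ne_zero (ne_of_gt Real.pi_pos),
      Real.log_pow]
  rw [Real.log_rpow hx1, Real.log_div (by positivity) hl2.ne', Real.log_mul hu.ne' hww.ne',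
      Real.log_pow]
  rw [Real.log_div hu.ne' hl2.ne', Real.log_pow]
  have hlam0 : lam ≠ 0 := ne_of_gt hl
  field_simp
  ring
end
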